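/- Let m, g > 0. Define B(r) = 1 − 2mr²/(r²+g²)^{3/2} for r > 0, A(r) = (1−B(r))/r² + B''(r)/2, the Lagrangian 𝓛(s) = (3m/g³)·[√(2g²s)/(1+√(2g²s))]^{5/2} for s > 0, and F(r) = g²/(2r⁴). Then for all r > 0, 4F(r)·𝓛'(F(r)) = A(r). -/

import Mathlib

/-- The Bardeen regular black-hole metric function with mass `m` and magnetic
charge `g`. -/
noncomputable def bardeenB (m g : ℝ) (r : ℝ) : ℝ :=
  1 - 2 * m * r ^ 2 / (r ^ 2 + g ^ 2) ^ ((3 : ℝ) / 2)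

/-- The Ayón-Beato–García nonlinear electrodynamics Lagrangian. -/
noncomputable def abgLagrangian (m g : ℝ) (s : ℝ) : ℝ :=
  (3 * m / g ^ 3) *
    (Real.sqrt (2 * g ^ 2 * s) / (1 + Real.sqrt (2 * g ^ 2 * s))) ^ ((5 : ℝ) / 2)

lemma rpow_half_nat {x : ℝ} (hx : 0 < x) (n : ℕ) :
    x ^ ((n : ℝ) / 2) = Real.sqrt x ^ n := by
  rw [Real.sqrt_eq_rpow, ← Real.rpow_natCast (x ^ ((1:ℝ)/2)) n, ← Real.rpow_mul hx.le]
  congr 1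
  ring

lemma hasDerivAt_bardeenB (m g : ℝ) (hg : 0 < g) (r : ℝ) :
    HasDerivAt (bardeenB m g)
      (-2 * m * r * (2 * g ^ 2 - r ^ 2) / (r ^ 2 + g ^ 2) ^ ((5:ℝ)/2)) r := by
  have hP : (0:ℝ) < r ^ 2 + g ^ 2 := by positivity
  have hPd : HasDerivAt (fun r : ℝ => r ^ 2 + g ^ 2) (2 * r) r := by
    simpa using (hasDerivAt_pow 2 r).add_const (g ^ 2)
  have hv : HasDerivAt (fun r : ℝ => (r ^ 2 + g ^ 2) ^ ((3:ℝ)/2))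
      (2 * r * ((3:ℝ)/2) * (r ^ 2 + g ^ 2) ^ ((3:ℝ)/2 - 1)) r :=
    hPd.rpow_const (Or.inl hP.ne')
  have hu : HasDerivAt (fun r : ℝ => 2 * m * r ^ 2) (2 * m * (2 * r)) r := by
    simpa [mul_assoc] using (hasDerivAt_pow 2 r).const_mul (2 * m)
  have hvne : (r ^ 2 + g ^ 2) ^ ((3:ℝ)/2) ≠ 0 := by positivity
  have h := ((hu.div hv hvne).const_sub 1)
  refine h.congr_deriv ?_
  have hs : 0 < Real.sqrt (r ^ 2 + g ^ 2) := Real.sqrt_pos.mpr hP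
  have hs2 : Real.sqrt (r ^ 2 + g ^ 2) ^ 2 = r ^ 2 + g ^ 2 := Real.sq_sqrt hP.le
  have h32 : (r ^ 2 + g ^ 2) ^ ((3:ℝ)/2) = Real.sqrt (r ^ 2 + g ^ 2) ^ 3 := by
    exact_mod_cast rpow_half_nat hP 3
  have h52 : (r ^ 2 + g ^ 2) ^ ((5:ℝ)/2) = Real.sqrt (r ^ 2 + g ^ 2) ^ 5 := by
    exact_mod_cast rpow_half_nat hP 5
  have h12 : (r ^ 2 + g ^ 2) ^ ((3:ℝ)/2 - 1) = Real.sqrt (r ^ 2 + g ^ 2) ^ 1 := by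
    rw [show (3:ℝ)/2 - 1 = (1:ℕ)/2 by norm_num]
    exact_mod_cast rpow_half_nat hP 1
  rw [h32, h52, h12]
  set s := Real.sqrt (r ^ 2 + g ^ 2) with hsdef
  have hg2 : g ^ 2 = s ^ 2 - r ^ 2 := by linarith [hs2]
  rw [hg2]
  field_simp
  ring

lemma hasDerivAt_deriv_bardeenB (m g : ℝ) (hg : 0 < g) (r : ℝ) :
    HasDerivAt (deriv (bardeenB m g))
      ((-4 * m * (r ^ 2 + g ^ 2) ^ 2 + 30 * m * r ^ 2 * (r ^ 2 + g ^ 2) - 30 * m * r ^ 4)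
        / (r ^ 2 + g ^ 2) ^ ((7:ℝ)/2)) r := by
  have hfun : deriv (bardeenB m g)
      = fun r => -2 * m * r * (2 * g ^ 2 - r ^ 2) / (r ^ 2 + g ^ 2) ^ ((5:ℝ)/2) := by
    funext x
    exact (hasDerivAt_bardeenB m g hg x).deriv
  rw [hfun]
  have hP : (0:ℝ) < r ^ 2 + g ^ 2 := by positivity
  have hPd : HasDerivAt (fun r : ℝ => r ^ 2 + g ^ 2) (2 * r) r := by
    simpa using (hasDerivAt_pow 2 r).add_const (g ^ 2)
  have hv : HasDerivAt (fun r : ℝ => (r ^ 2 + g ^ 2) ^ ((5:ℝ)/2))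
      (2 * r * ((5:ℝ)/2) * (r ^ 2 + g ^ 2) ^ ((5:ℝ)/2 - 1)) r :=
    hPd.rpow_const (Or.inl hP.ne')
  have hu : HasDerivAt (fun r : ℝ => -2 * m * r * (2 * g ^ 2 - r ^ 2))
      (-2 * m * (2 * g ^ 2 - 3 * r ^ 2)) r := by
    have : HasDerivAt (fun r : ℝ => (-2 * m) * (2 * g ^ 2 * r - r ^ 3))
        ((-2 * m) * (2 * g ^ 2 - 3 * r ^ 2)) r := by
      have h1 : HasDerivAt (fun r : ℝ => 2 * g ^ 2 * r - r ^ 3)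
          (2 * g ^ 2 - 3 * r ^ 2) r := by
        exact (((hasDerivAt_id r).const_mul (2 * g ^ 2)).sub
          (hasDerivAt_pow 3 r)).congr_deriv (by norm_num)
      simpa using h1.const_mul (-2 * m)
    convert this using 2 with x
    ring
  have hvne : (r ^ 2 + g ^ 2) ^ ((5:ℝ)/2) ≠ 0 := by positivity
  have h := hu.div hv hvne
  refine h.congr_deriv ?_
  have hs : 0 < Real.sqrt (r ^ 2 + g ^ 2) := Real.sqrt_pos.mpr hP
  have hs2 : Real.sqrt (r ^ 2 + g ^ 2) ^ 2 = r ^ 2 + g ^ 2 := Real.sq_sqrt hP.le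
  have h52 : (r ^ 2 + g ^ 2) ^ ((5:ℝ)/2) = Real.sqrt (r ^ 2 + g ^ 2) ^ 5 := by
    exact_mod_cast rpow_half_nat hP 5
  have h72 : (r ^ 2 + g ^ 2) ^ ((7:ℝ)/2) = Real.sqrt (r ^ 2 + g ^ 2) ^ 7 := by
    exact_mod_cast rpow_half_nat hP 7
  have h32 : (r ^ 2 + g ^ 2) ^ ((5:ℝ)/2 - 1) = Real.sqrt (r ^ 2 + g ^ 2) ^ 3 := by
    rw [show (5:ℝ)/2 - 1 = (3:ℕ)/2 by norm_num]
    exact_mod_cast rpow_half_nat hP 3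
  rw [h52, h72, h32]
  set s := Real.sqrt (r ^ 2 + g ^ 2) with hsdef
  have hg2 : g ^ 2 = s ^ 2 - r ^ 2 := by linarith [hs2]
  rw [hg2]
  field_simp
  ring

lemma deriv_abg (m g : ℝ) (hg : 0 < g) (r : ℝ) (hr : 0 < r) :
    deriv (abgLagrangian m g) (g ^ 2 / (2 * r ^ 4))
      = 15 * m * r ^ 6 / (2 * Real.sqrt (r ^ 2 + g ^ 2) ^ 7) := by
  set s0 : ℝ := g ^ 2 / (2 * r ^ 4) with hs0def
  have hs0 : 0 < s0 := by positivity
  have harg : 2 * g ^ 2 * s0 = (g ^ 2 / r ^ 2) ^ 2 := by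
    rw [hs0def]; field_simp
  have ht : Real.sqrt (2 * g ^ 2 * s0) = g ^ 2 / r ^ 2 := by
    rw [harg, Real.sqrt_sq (by positivity)]
  have htpos : 0 < Real.sqrt (2 * g ^ 2 * s0) := by rw [ht]; positivity
  have h1 : HasDerivAt (fun s : ℝ => 2 * g ^ 2 * s) (2 * g ^ 2) s0 := by
    simpa using (hasDerivAt_id s0).const_mul (2 * g ^ 2)
  have h2 : HasDerivAt (fun s : ℝ => Real.sqrt (2 * g ^ 2 * s))
      (2 * g ^ 2 / (2 * Real.sqrt (2 * g ^ 2 * s0))) s0 :=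
    h1.sqrt (by positivity)
  have h3 := h2.div (h2.const_add 1) (by positivity)
  have h4 := (h3.rpow_const (p := (5:ℝ)/2) (Or.inr (by norm_num))).const_mul (3 * m / g ^ 3)
  have hderiv := h4.deriv
  have hLag : abgLagrangian m g = fun s =>
      (3 * m / g ^ 3) * ((fun s : ℝ => Real.sqrt (2 * g ^ 2 * s) /
        (1 + Real.sqrt (2 * g ^ 2 * s))) s) ^ ((5:ℝ)/2) := rfl
  rw [show deriv (abgLagrangian m g) s0 = _ from hderiv]
  simp only [Pi.div_apply]
  have hP : (0:ℝ) < r ^ 2 + g ^ 2 := by positivity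
  have hsP : 0 < Real.sqrt (r ^ 2 + g ^ 2) := Real.sqrt_pos.mpr hP
  have hs2 : Real.sqrt (r ^ 2 + g ^ 2) ^ 2 = r ^ 2 + g ^ 2 := Real.sq_sqrt hP.le
  have hX : Real.sqrt (2 * g ^ 2 * s0) / (1 + Real.sqrt (2 * g ^ 2 * s0))
      = g ^ 2 / (r ^ 2 + g ^ 2) := by
    rw [ht]; field_simp
  have hXpow : (Real.sqrt (2 * g ^ 2 * s0) / (1 + Real.sqrt (2 * g ^ 2 * s0))) ^ ((5:ℝ)/2 - 1)
      = g ^ 3 / Real.sqrt (r ^ 2 + g ^ 2) ^ 3 := by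
    rw [hX, show (5:ℝ)/2 - 1 = ((3:ℕ) : ℝ)/2 by norm_num,
      rpow_half_nat (by positivity) 3, Real.sqrt_div (sq_nonneg g),
      Real.sqrt_sq hg.le, div_pow]
  rw [hXpow, ht,
    show Real.sqrt (r ^ 2 + g ^ 2) ^ 7
      = Real.sqrt (r ^ 2 + g ^ 2) ^ 3 * (r ^ 2 + g ^ 2) ^ 2 by
        linear_combination (Real.sqrt (r ^ 2 + g ^ 2) ^ 3 *
          (Real.sqrt (r ^ 2 + g ^ 2) ^ 2 + (r ^ 2 + g ^ 2))) * hs2]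
  field_simp
  ring

/-- With `A(r) = (1−B)/r² + B''/2` for the Bardeen metric and
`F(r) = g²/(2r⁴)`, the purely magnetic field equation `4F·𝓛'(F) = A` holds on
`(0,∞)` for the Ayón-Beato–García Lagrangian. -/
theorem bardeen_abg_field_equation (m g : ℝ) (hm : 0 < m) (hg : 0 < g) :
    ∀ r : ℝ, 0 < r →
      4 * (g ^ 2 / (2 * r ^ 4)) * deriv (abgLagrangian m g) (g ^ 2 / (2 * r ^ 4)) =
        (1 - bardeenB m g r) / r ^ 2 + deriv (deriv (bardeenB m g)) r / 2 := by
  intro r hr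
  have hP : (0:ℝ) < r ^ 2 + g ^ 2 := by positivity
  have hsP : 0 < Real.sqrt (r ^ 2 + g ^ 2) := Real.sqrt_pos.mpr hP
  have hs2 : Real.sqrt (r ^ 2 + g ^ 2) ^ 2 = r ^ 2 + g ^ 2 := Real.sq_sqrt hP.le
  have h32 : (r ^ 2 + g ^ 2) ^ ((3:ℝ)/2) = Real.sqrt (r ^ 2 + g ^ 2) ^ 3 := by
    exact_mod_cast rpow_half_nat hP 3
  have h72 : (r ^ 2 + g ^ 2) ^ ((7:ℝ)/2) = Real.sqrt (r ^ 2 + g ^ 2) ^ 7 := by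
    exact_mod_cast rpow_half_nat hP 7
  rw [deriv_abg m g hg r hr, (hasDerivAt_deriv_bardeenB m g hg r).deriv,
    bardeenB, h32, h72,
    show Real.sqrt (r ^ 2 + g ^ 2) ^ 7
      = Real.sqrt (r ^ 2 + g ^ 2) ^ 3 * (r ^ 2 + g ^ 2) ^ 2 by
        linear_combination (Real.sqrt (r ^ 2 + g ^ 2) ^ 3 *
          (Real.sqrt (r ^ 2 + g ^ 2) ^ 2 + (r ^ 2 + g ^ 2))) * hs2]
  field_simp
  ring
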